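/- For the bit-shift channel, the supremum defining the capacity C_bitshift(J_ε) = sup_ℙ [ h((ℙ × J_ε) ∘ φ^{−1}) − h(J_ε) ], taken over all translation-invariant probability measures ℙ on A^ℤ, is achieved: there exists a translation-invariant measure ℙ* on A^ℤ with h((ℙ* × J_ε) ∘ φ^{−1}) − h(J_ε) = C_bitshift(J_ε). -/

import Mathlib

open MeasureTheory ProbabilityTheory Real Filter

/-- The left shift on two-sided sequences. -/
def shift {γ : Type*} (x : ℤ → γ) : ℤ → γ := fun n => x (n + 1)

/-- The entropy of the block of coordinates `0, …, n−1` of a measure `μ` on `γ^ℤ`,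
computed over words with letters in the finite alphabet `S`. -/
noncomputable def blockEntropy {γ : Type*} [DecidableEq γ] [MeasurableSpace γ] (S : Finset γ)
    (μ : Measure (ℤ → γ)) (n : ℕ) : ℝ :=
  ∑ u : Fin n → (S : Finset γ),
    Real.negMulLog ((μ {x | ∀ i : Fin n, x ((i : ℕ) : ℤ) = (u i : γ)}).toReal)

/-- The (Kolmogorov–Sinai) entropy rate of a translation-invariant measure on `γ^ℤ` supported
on the alphabet `S`, expressed via subadditivity as `inf_n H_n/n`. -/
noncomputable def entropyRateSeq {γ : Type*} [DecidableEq γ] [MeasurableSpace γ] (S : Finset γ)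
    (μ : Measure (ℤ → γ)) : ℝ :=
  ⨅ n : ℕ, blockEntropy S μ (n + 1) / (n + 1)

/-- The bit-shift factor map `φ(x, ω)_n = x_n + ω_{n,1} − ω_{n,2}`. -/
def bitShiftMap (z : (ℤ → ℤ) × (ℤ → ℤ × ℤ)) : ℤ → ℤ :=
  fun n => z.1 n + (z.2 n).1 - (z.2 n).2

/-- The one-letter jitter weights: `ε` for `±1`, `1 − 2ε` for `0`, and `0` otherwise. -/
noncomputable def jitterWeight (ε : ℝ) (s : ℤ) : ENNReal :=
  if s = 1 ∨ s = -1 then ENNReal.ofReal ε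
  else if s = 0 then ENNReal.ofReal (1 - 2 * ε) else 0

/-- The input space `A^ℤ`, `A = {d, …, k}`, inside `ℤ^ℤ`. -/
def inputSet (d k : ℤ) : Set (ℤ → ℤ) := {x | ∀ n : ℤ, d ≤ x n ∧ x n ≤ k}

/-- The jitter space `Ω_J ⊆ Ω^ℤ`, `Ω = {−1,0,1}²`, of chained pairs. -/
def jitterSet : Set (ℤ → ℤ × ℤ) :=
  {ω | (∀ n : ℤ, ((ω n).1 = -1 ∨ (ω n).1 = 0 ∨ (ω n).1 = 1) ∧
        ((ω n).2 = -1 ∨ (ω n).2 = 0 ∨ (ω n).2 = 1)) ∧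
       (∀ n : ℤ, (ω n).2 = (ω (n + 1)).1)}

/-- The alphabet `B = {d−2, …, k+2}` of the output space. -/
noncomputable def outAlphabet (d k : ℤ) : Finset ℤ := Finset.Icc (d - 2) (k + 2)

/-- The alphabet `Ω = {−1,0,1}²` of the jitter process. -/
noncomputable def jitterAlphabet : Finset (ℤ × ℤ) := Finset.Icc (-1) 1 ×ˢ Finset.Icc (-1) 1

/-- The capacity of the bit-shift channel with jitter measure `J`:
`C = sup_ℙ [ h((ℙ × J) ∘ φ⁻¹) − h(J) ]`, the supremum over all translation-invariant
probability measures `ℙ` on `A^ℤ`. -/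
noncomputable def capacity (d k : ℤ) (J : Measure (ℤ → ℤ × ℤ)) : ℝ :=
  sSup {c : ℝ | ∃ P : Measure (ℤ → ℤ), IsProbabilityMeasure P ∧
    MeasurePreserving shift P P ∧ P (inputSet d k) = 1 ∧
    c = entropyRateSeq (outAlphabet d k) (Measure.map bitShiftMap (P.prod J))
        - entropyRateSeq jitterAlphabet J}

/-! ### Auxiliary topological-measure-theoretic lemmas on Cantor-like sequence spaces -/

section CantorAux

open Set TopologicalSpace

variable {α : Type*} [TopologicalSpace α] [DiscreteTopology α] [Finite α]
  [MeasurableSpace α] [BorelSpace α]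

lemma borel_eq_clopen : (inferInstance : MeasurableSpace (ℤ → α)) =
    .generateFrom {E : Set (ℤ → α) | IsClopen E} := by
  rw [BorelSpace.measurable_eq (α := ℤ → α)]
  exact isTopologicalBasis_isClopen.borel_eq_generateFrom

lemma measure_ext_isClopen (μ ν : Measure (ℤ → α)) [IsProbabilityMeasure μ]
    [IsProbabilityMeasure ν] (h : ∀ E : Set (ℤ → α), IsClopen E → μ E = ν E) : μ = ν := by
  refine ext_of_generate_finite _ borel_eq_clopen (fun s hs t ht _ => hs.inter ht)
    (fun s hs => h s hs) ?_
  simp [measure_univ]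

omit [MeasurableSpace α] [BorelSpace α] in
lemma exists_isClopen_between {K U : Set (ℤ → α)} (hK : IsCompact K) (hU : IsOpen U)
    (hKU : K ⊆ U) : ∃ E : Set (ℤ → α), IsClopen E ∧ K ⊆ E ∧ E ⊆ U := by
  have hV : ∀ x ∈ K, ∃ V : Set (ℤ → α), IsClopen V ∧ x ∈ V ∧ V ⊆ U := fun x hx =>
    compact_exists_isClopen_in_isOpen hU (hKU hx)
  choose V hV1 hV2 hV3 using hV
  obtain ⟨t, ht⟩ := hK.elim_nhds_subcover' (fun x hx => V x hx)
    (fun x hx => (hV1 x hx).2.mem_nhds (hV2 x hx))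
  refine ⟨⋃ x ∈ t, V x.1 x.2, ?_, ht, ?_⟩
  · exact isClopen_biUnion_finset (fun x _ => hV1 _ _)
  · exact iUnion₂_subset fun x _ => hV3 _ _

/-- A finitely additive normalized set function on the clopen subsets of `ℤ → α`
extends to a (probability) Borel measure. -/
theorem exists_measure_of_clopen (p : Set (ℤ → α) → ENNReal)
    (hadd : ∀ E F : Set (ℤ → α), IsClopen E → IsClopen F → Disjoint E F →
      p (E ∪ F) = p E + p F)
    (hp1 : p univ = 1) :
    ∃ μ : Measure (ℤ → α), IsProbabilityMeasure μ ∧ ∀ E : Set (ℤ → α), IsClopen E → μ E = p E := by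
  classical
  have hmono : ∀ E F : Set (ℤ → α), IsClopen E → IsClopen F → E ⊆ F → p E ≤ p F := by
    intro E F hE hF hEF
    have h1 : p F = p E + p (F \ E) := by
      rw [← hadd E (F \ E) hE (hF.diff hE) disjoint_sdiff_right, union_diff_cancel hEF]
    rw [h1]; exact le_self_add
  have hsub : ∀ E F : Set (ℤ → α), IsClopen E → IsClopen F → p (E ∪ F) ≤ p E + p F := by
    intro E F hE hF
    have h1 : E ∪ F = E ∪ (F \ E) := by rw [union_diff_self]
    rw [h1, hadd E (F \ E) hE (hF.diff hE) disjoint_sdiff_right]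
    exact add_le_add_right (hmono _ _ (hF.diff hE) hF diff_subset) _
  have hle1 : ∀ E : Set (ℤ → α), IsClopen E → p E ≤ 1 := fun E hE =>
    hp1 ▸ hmono E univ hE isClopen_univ (subset_univ E)
  set q : Set (ℤ → α) → ENNReal :=
    fun K => ⨅ (E : {E : Set (ℤ → α) // IsClopen E ∧ K ⊆ E}), p E.1 with hq
  have hqle : ∀ K E, IsClopen E → K ⊆ E → q K ≤ p E := by
    intro K E hE hKE
    exact iInf_le (fun (E : {E : Set (ℤ → α) // IsClopen E ∧ K ⊆ E}) => p E.1) ⟨E, hE, hKE⟩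
  have hqle1 : ∀ K, q K ≤ 1 := fun K =>
    le_trans (hqle K univ isClopen_univ (subset_univ K)) (hle1 _ isClopen_univ)
  have hqne : ∀ K, q K ≠ ⊤ := fun K => (lt_of_le_of_lt (hqle1 K) ENNReal.one_lt_top).ne
  have hq_clopen : ∀ E : Set (ℤ → α), IsClopen E → q E = p E := by
    intro E hE
    refine le_antisymm (hqle E E hE subset_rfl) (le_iInf fun F => hmono E F.1 hE F.2.1 F.2.2)
  have hqmono : ∀ K L : Set (ℤ → α), K ⊆ L → q K ≤ q L :=
    fun K L hKL => le_iInf fun F => hqle K F.1 F.2.1 (hKL.trans F.2.2)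
  have hqsub : ∀ K L : Set (ℤ → α), q (K ∪ L) ≤ q K + q L := by
    intro K L
    have h1 : ∀ (E : {E : Set (ℤ → α) // IsClopen E ∧ K ⊆ E})
        (F : {F : Set (ℤ → α) // IsClopen F ∧ L ⊆ F}), q (K ∪ L) ≤ p E.1 + p F.1 := by
      intro E F
      exact le_trans (hqle _ (E.1 ∪ F.1) (E.2.1.union F.2.1)
        (union_subset_union E.2.2 F.2.2)) (hsub _ _ E.2.1 F.2.1)
    have h2 : q K + q L = ⨅ (E : {E : Set (ℤ → α) // IsClopen E ∧ K ⊆ E})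
        (F : {F : Set (ℤ → α) // IsClopen F ∧ L ⊆ F}), (p E.1 + p F.1) := by
      rw [hq, ENNReal.iInf_add]
      exact iInf_congr fun E => ENNReal.add_iInf
    rw [h2]
    exact le_iInf fun E => le_iInf fun F => h1 E F
  set ct : Content (ℤ → α) :=
    { toFun := fun K => (q K.1).toNNReal
      mono' := fun K L h => ENNReal.toNNReal_mono (hqne _) (hqmono _ _ h)
      sup_disjoint' := by
        intro K L hdisj _ _
        have key : q (K.1 ∪ L.1) = q K.1 + q L.1 := by
          refine le_antisymm (hqsub _ _) ?_
          obtain ⟨D, hD, hKD, hDL⟩ := exists_isClopen_between K.2 L.2.isClosed.isOpen_compl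
            (subset_compl_iff_disjoint_right.mpr hdisj)
          refine le_iInf fun E => ?_
          obtain ⟨hE, hKLE⟩ := E.2
          have h1 : p E.1 = p (E.1 ∩ D) + p (E.1 \ D) := by
            rw [← hadd _ _ (hE.inter hD) (hE.diff hD)
              (disjoint_sdiff_right.mono_left inter_subset_right)]
            congr 1
            rw [inter_union_diff]
          have h2 : q K.1 ≤ p (E.1 ∩ D) := hqle _ _ (hE.inter hD)
            (subset_inter ((subset_union_left).trans hKLE) hKD)
          have h3 : q L.1 ≤ p (E.1 \ D) := hqle _ _ (hE.diff hD)
            (subset_diff.mpr ⟨(subset_union_right).trans hKLE,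
              ((subset_compl_iff_disjoint_right.mp hDL).symm)⟩)
          rw [h1]
          exact add_le_add h2 h3
        have h4 := congrArg ENNReal.toNNReal key
        rw [ENNReal.toNNReal_add (hqne _) (hqne _)] at h4
        exact h4
      sup_le' := by
        intro K L
        have h2 := ENNReal.toNNReal_mono
          (ENNReal.add_ne_top.mpr ⟨hqne K.1, hqne L.1⟩) (hqsub K.1 L.1)
        rwa [ENNReal.toNNReal_add (hqne _) (hqne _)] at h2 }
  refine ⟨ct.measure, ?_, ?_⟩
  case refine_2 =>
    intro E hE
    have hEc : IsCompact E := hE.isClosed.isCompact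
    have h5 : ct.measure E = ct.outerMeasure E := Content.measure_apply ct hE.2.measurableSet
    rw [h5, ct.outerMeasure_of_isOpen E hE.2, ct.innerContent_of_isCompact hEc hE.2]
    show ((q E).toNNReal : ENNReal) = p E
    rw [ENNReal.coe_toNNReal (hqne E), hq_clopen E hE]
  case refine_1 =>
    constructor
    have h6 : ct.measure univ = p univ := by
      have h5 : ct.measure univ = ct.outerMeasure univ := Content.measure_apply ct .univ
      rw [h5, ct.outerMeasure_of_isOpen univ isOpen_univ,
        ct.innerContent_of_isCompact isCompact_univ isOpen_univ]
      show ((q univ).toNNReal : ENNReal) = p univ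
      rw [ENNReal.coe_toNNReal (hqne univ), hq_clopen univ isClopen_univ]
    rw [h6, hp1]

end CantorAux

/-! ### Measurability lemmas and the key cylinder decomposition -/

section BitShiftAux

open Set

lemma measurable_shift {γ : Type*} [MeasurableSpace γ] : Measurable (shift (γ := γ)) :=
  measurable_pi_lambda _ fun n => measurable_pi_apply (n + 1)

lemma measurable_bitShiftMap : Measurable bitShiftMap := by
  refine measurable_pi_lambda _ fun n => ?_
  have h1 : Measurable fun z : (ℤ → ℤ) × (ℤ → ℤ × ℤ) => (z.1 n, z.2 n) :=
    ((measurable_pi_apply n).comp measurable_fst).prodMk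
      ((measurable_pi_apply n).comp measurable_snd)
  exact (measurable_of_countable (fun q : ℤ × (ℤ × ℤ) => q.1 + q.2.1 - q.2.2)).comp h1

lemma measurableSet_cylinderZ {γ : Type*} [MeasurableSpace γ] [MeasurableSingletonClass γ]
    (n : ℕ) (u : Fin n → γ) :
    MeasurableSet {x : ℤ → γ | ∀ i : Fin n, x ((i : ℕ) : ℤ) = u i} := by
  have h : {x : ℤ → γ | ∀ i : Fin n, x ((i : ℕ) : ℤ) = u i}
      = ⋂ i : Fin n, (fun x : ℤ → γ => x ((i : ℕ) : ℤ)) ⁻¹' {u i} := by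
    ext x; simp [Set.mem_iInter]
  rw [h]
  exact MeasurableSet.iInter fun i => (measurable_pi_apply _) (measurableSet_singleton _)

lemma measurableSet_inputSet (d k : ℤ) : MeasurableSet (inputSet d k) := by
  have h : inputSet d k = ⋂ n : ℤ, (fun x : ℤ → ℤ => x n) ⁻¹' (Set.Icc d k) := by
    ext x; simp [inputSet, Set.mem_iInter, Set.mem_Icc]
  rw [h]
  exact MeasurableSet.iInter fun n => (measurable_pi_apply _) measurableSet_Icc

lemma measurableSet_jitterE (n : ℕ) (w u : Fin n → ℤ) :
    MeasurableSet {ω : ℤ → ℤ × ℤ |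
      ∀ i : Fin n, w i + (ω ((i : ℕ) : ℤ)).1 - (ω ((i : ℕ) : ℤ)).2 = u i} := by
  have h : {ω : ℤ → ℤ × ℤ | ∀ i : Fin n, w i + (ω ((i : ℕ) : ℤ)).1 - (ω ((i : ℕ) : ℤ)).2 = u i}
      = ⋂ i : Fin n, (fun ω : ℤ → ℤ × ℤ => ω ((i : ℕ) : ℤ)) ⁻¹'
          {v : ℤ × ℤ | w i + v.1 - v.2 = u i} := by
    ext ω; simp [Set.mem_iInter]
  rw [h]
  exact MeasurableSet.iInter fun i => (measurable_pi_apply _)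
    ((measurable_of_countable (fun v : ℤ × ℤ => w i + v.1 - v.2)) (measurableSet_singleton (u i)))

/-- The key decomposition of the output cylinder measure. -/
lemma out_cylinder_eq (d k : ℤ) (J : Measure (ℤ → ℤ × ℤ)) [IsProbabilityMeasure J]
    (P : Measure (ℤ → ℤ)) [IsProbabilityMeasure P] (hP : P (inputSet d k) = 1)
    (n : ℕ) (u : Fin n → ℤ) :
    Measure.map bitShiftMap (P.prod J) {x : ℤ → ℤ | ∀ i : Fin n, x ((i : ℕ) : ℤ) = u i}
      = ∑ w : Fin n → ↥(Finset.Icc d k),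
          P {x : ℤ → ℤ | ∀ i : Fin n, x ((i : ℕ) : ℤ) = (w i : ℤ)}
            * J {ω : ℤ → ℤ × ℤ |
                ∀ i : Fin n, (w i : ℤ) + (ω ((i : ℕ) : ℤ)).1 - (ω ((i : ℕ) : ℤ)).2 = u i} := by
  classical
  have hPc : P (inputSet d k)ᶜ = 0 := by
    rw [measure_compl (measurableSet_inputSet d k) (measure_ne_top P _), hP, measure_univ,
      tsub_self]
  rw [Measure.map_apply measurable_bitShiftMap (measurableSet_cylinderZ n u)]
  have hfull : (P.prod J) ((inputSet d k) ×ˢ (univ : Set (ℤ → ℤ × ℤ)))ᶜ = 0 := by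
    rw [Set.compl_prod_eq_union]
    refine measure_union_null ?_ ?_
    · rw [Measure.prod_prod, measure_univ, hPc, zero_mul]
    · simp
  have hmain : bitShiftMap ⁻¹' {x : ℤ → ℤ | ∀ i : Fin n, x ((i : ℕ) : ℤ) = u i}
      ∩ ((inputSet d k) ×ˢ (univ : Set (ℤ → ℤ × ℤ)))
      = ⋃ w : Fin n → ↥(Finset.Icc d k),
          (({x : ℤ → ℤ | ∀ i : Fin n, x ((i : ℕ) : ℤ) = (w i : ℤ)} ∩ inputSet d k)
            ×ˢ {ω : ℤ → ℤ × ℤ |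
                ∀ i : Fin n, (w i : ℤ) + (ω ((i : ℕ) : ℤ)).1 - (ω ((i : ℕ) : ℤ)).2 = u i}) := by
    ext ⟨x, ω⟩
    simp only [Set.mem_inter_iff, Set.mem_preimage, Set.mem_setOf_eq, Set.mem_prod,
      Set.mem_univ, and_true, Set.mem_iUnion]
    constructor
    · rintro ⟨hbit, hx⟩
      refine ⟨fun i => ⟨x ((i : ℕ) : ℤ), Finset.mem_Icc.mpr (hx _)⟩, ⟨fun i => rfl, hx⟩, ?_⟩
      intro i
      exact hbit i
    · rintro ⟨w, ⟨hxw, hx⟩, hω⟩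
      refine ⟨fun i => ?_, hx⟩
      have h1 := hω i
      rw [← hxw i] at h1
      exact h1
  rw [← measure_inter_conull hfull, hmain, measure_iUnion, tsum_fintype]
  · refine Finset.sum_congr rfl fun w _ => ?_
    rw [Measure.prod_prod, measure_inter_conull hPc]
  · intro w w' hww'
    obtain ⟨i, hi⟩ := Function.ne_iff.mp hww'
    refine Set.disjoint_left.mpr ?_
    rintro ⟨x, ω⟩ ⟨⟨hxw, -⟩, -⟩ ⟨⟨hxw', -⟩, -⟩
    exact hi (Subtype.ext ((hxw i).symm.trans (hxw' i)))
  · intro w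
    exact (((measurableSet_cylinderZ n fun i => (w i : ℤ)).inter
      (measurableSet_inputSet d k)).prod (measurableSet_jitterE n (fun i => (w i : ℤ)) u))

/-- The real-valued form of the block entropy of the output measure. -/
lemma blockEntropy_out_formula (d k : ℤ) (J : Measure (ℤ → ℤ × ℤ)) [IsProbabilityMeasure J]
    (P : Measure (ℤ → ℤ)) [IsProbabilityMeasure P] (hP : P (inputSet d k) = 1) (N : ℕ) :
    blockEntropy (outAlphabet d k) (Measure.map bitShiftMap (P.prod J)) N
      = ∑ u : Fin N → ↥(outAlphabet d k), Real.negMulLog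
          (∑ w : Fin N → ↥(Finset.Icc d k),
            (P {x : ℤ → ℤ | ∀ i : Fin N, x ((i : ℕ) : ℤ) = (w i : ℤ)}).toReal
              * (J {ω : ℤ → ℤ × ℤ |
                  ∀ i : Fin N, (w i : ℤ) + (ω ((i : ℕ) : ℤ)).1 - (ω ((i : ℕ) : ℤ)).2
                    = (u i : ℤ)}).toReal) := by
  unfold blockEntropy
  refine Finset.sum_congr rfl fun u _ => ?_
  congr 1
  rw [out_cylinder_eq d k J P hP N (fun i => (u i : ℤ)),
    ENNReal.toReal_sum (fun w _ => ENNReal.mul_ne_top (measure_ne_top _ _) (measure_ne_top _ _))]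
  exact Finset.sum_congr rfl fun w _ => ENNReal.toReal_mul

lemma negMulLog_le_one {x : ℝ} (h0 : 0 ≤ x) (h1 : x ≤ 1) : Real.negMulLog x ≤ 1 := by
  rcases eq_or_lt_of_le h0 with h | h
  · simp [← h, Real.negMulLog]
  · have hlog : Real.log x⁻¹ ≤ x⁻¹ - 1 := Real.log_le_sub_one_of_pos (inv_pos.mpr h)
    have heq : Real.negMulLog x = x * Real.log x⁻¹ := by
      rw [Real.log_inv, Real.negMulLog]; ring
    rw [heq]
    calc x * Real.log x⁻¹ ≤ x * (x⁻¹ - 1) := by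
          exact mul_le_mul_of_nonneg_left hlog h0
      _ = 1 - x := by field_simp
      _ ≤ 1 := by linarith

lemma blockEntropy_nonneg {γ : Type*} [DecidableEq γ] [MeasurableSpace γ] (S : Finset γ)
    (μ : Measure (ℤ → γ)) [IsProbabilityMeasure μ] (n : ℕ) : 0 ≤ blockEntropy S μ n :=
  Finset.sum_nonneg fun u _ => Real.negMulLog_nonneg ENNReal.toReal_nonneg
    (by simpa using ENNReal.toReal_mono ENNReal.one_ne_top (prob_le_one))

lemma blockEntropy_le_card {γ : Type*} [DecidableEq γ] [MeasurableSpace γ] (S : Finset γ)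
    (μ : Measure (ℤ → γ)) [IsProbabilityMeasure μ] (n : ℕ) :
    blockEntropy S μ n ≤ (Fintype.card (Fin n → (S : Finset γ)) : ℝ) := by
  calc blockEntropy S μ n ≤ ∑ _u : Fin n → (S : Finset γ), (1 : ℝ) :=
        Finset.sum_le_sum fun u _ => negMulLog_le_one ENNReal.toReal_nonneg
          (by simpa using ENNReal.toReal_mono ENNReal.one_ne_top (prob_le_one))
    _ = _ := by simp

lemma entropyRateSeq_bddBelow {γ : Type*} [DecidableEq γ] [MeasurableSpace γ] (S : Finset γ)
    (μ : Measure (ℤ → γ)) [IsProbabilityMeasure μ] :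
    BddBelow (Set.range fun n : ℕ => blockEntropy S μ (n + 1) / (n + 1)) := by
  refine ⟨0, fun x hx => ?_⟩
  obtain ⟨n, rfl⟩ := hx
  exact div_nonneg (blockEntropy_nonneg S μ (n + 1)) (by positivity)

end BitShiftAux

open Topology in
/-- For the bit-shift channel, the supremum defining the capacity
`C_bitshift(J_ε) = sup_ℙ [ h((ℙ × J_ε) ∘ φ⁻¹) − h(J_ε) ]` over translation-invariant
probability measures `ℙ` on `A^ℤ` is achieved. -/
theorem stmt18 (d k : ℤ) (hd : 2 ≤ d) (hdk : d < k)
    (ε : ℝ) (hε : 0 < ε) (hε' : ε < 1 / 2)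
    (J : Measure (ℤ → ℤ × ℤ)) (hJprob : IsProbabilityMeasure J)
    (hJsupp : J jitterSet = 1)
    (hJcyl : ∀ (a : ℤ) (n : ℕ) (s : ℤ → ℤ),
      J {ω | ∀ i : ℤ, a ≤ i → i ≤ a + n → ω i = (s i, s (i + 1))}
        = ∏ i ∈ Finset.Icc a (a + n + 1), jitterWeight ε (s i)) :
    ∃ P : Measure (ℤ → ℤ), IsProbabilityMeasure P ∧
      MeasurePreserving shift P P ∧ P (inputSet d k) = 1 ∧
      entropyRateSeq (outAlphabet d k) (Measure.map bitShiftMap (P.prod J))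
          - entropyRateSeq jitterAlphabet J
        = capacity d k J := by
  classical
  haveI := hJprob
  set hJ : ℝ := entropyRateSeq jitterAlphabet J with hhJ
  set S : Set ℝ := {c : ℝ | ∃ P : Measure (ℤ → ℤ), IsProbabilityMeasure P ∧
    MeasurePreserving shift P P ∧ P (inputSet d k) = 1 ∧
    c = entropyRateSeq (outAlphabet d k) (Measure.map bitShiftMap (P.prod J))
        - entropyRateSeq jitterAlphabet J} with hSdef
  have hcap : capacity d k J = sSup S := rfl
  -- nonneg entropy rate facts
  have hf_nonneg : ∀ (P : Measure (ℤ → ℤ)), IsProbabilityMeasure P →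
      ∀ N : ℕ, 0 ≤ blockEntropy (outAlphabet d k) (Measure.map bitShiftMap (P.prod J)) N := by
    intro P hP N
    haveI := hP
    haveI : IsProbabilityMeasure (Measure.map bitShiftMap (P.prod J)) :=
      Measure.isProbabilityMeasure_map measurable_bitShiftMap.aemeasurable
    exact blockEntropy_nonneg _ _ N
  have hrate_le : ∀ (P : Measure (ℤ → ℤ)), IsProbabilityMeasure P → ∀ N : ℕ,
      entropyRateSeq (outAlphabet d k) (Measure.map bitShiftMap (P.prod J))
        ≤ blockEntropy (outAlphabet d k) (Measure.map bitShiftMap (P.prod J)) (N + 1)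
            / (N + 1) := by
    intro P hP N
    haveI := hP
    haveI : IsProbabilityMeasure (Measure.map bitShiftMap (P.prod J)) :=
      Measure.isProbabilityMeasure_map measurable_bitShiftMap.aemeasurable
    exact ciInf_le (entropyRateSeq_bddBelow _ _) N
  -- S is nonempty
  have hSne : S.Nonempty := by
    refine ⟨_, Measure.dirac (fun _ => d), inferInstance, ?_, ?_, rfl⟩
    · refine ⟨measurable_shift, ?_⟩
      rw [Measure.map_dirac' measurable_shift]
      rfl
    · rw [Measure.dirac_apply_of_mem]
      intro n
      exact ⟨le_refl d, le_of_lt hdk⟩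
  -- S is bounded above
  have hSbdd : BddAbove S := by
    refine ⟨(Fintype.card (Fin 1 → ((outAlphabet d k : Finset ℤ) : Finset ℤ)) : ℝ) - hJ, ?_⟩
    rintro c ⟨P, hP1, hP2, hP3, rfl⟩
    haveI := hP1
    haveI : IsProbabilityMeasure (Measure.map bitShiftMap (P.prod J)) :=
      Measure.isProbabilityMeasure_map measurable_bitShiftMap.aemeasurable
    have h1 := hrate_le P hP1 0
    have h2 := blockEntropy_le_card (outAlphabet d k) (Measure.map bitShiftMap (P.prod J)) 1
    norm_num at h1
    linarith [h1, h2]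
  -- approximating sequence
  obtain ⟨c, -, hc_tendsto, hc_mem⟩ := exists_seq_tendsto_sSup hSne hSbdd
  simp only [hSdef, Set.mem_setOf_eq] at hc_mem
  choose Pm hPm1 hPm2 hPm3 hPm4 using hc_mem
  set U : Ultrafilter ℕ := Ultrafilter.of atTop with hUdef
  have hU : (U : Filter ℕ) ≤ atTop := Ultrafilter.of_le _
  -- the compact alphabet embedding
  set ι : (ℤ → ↥(Finset.Icc d k)) → (ℤ → ℤ) := fun y n => (y n : ℤ) with hιdef
  have hι_meas : Measurable ι :=
    measurable_pi_lambda _ fun n => measurable_subtype_coe.comp (measurable_pi_apply n)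
  have hι_inj : Function.Injective ι := by
    intro y y' h
    funext n
    exact Subtype.ext (congrFun h n)
  have hemb : MeasurableEmbedding ι := hι_meas.measurableEmbedding hι_inj
  have hrange : Set.range ι = inputSet d k := by
    ext x
    constructor
    · rintro ⟨y, rfl⟩ n
      exact Finset.mem_Icc.mp (y n).2
    · intro hx
      exact ⟨fun n => ⟨x n, Finset.mem_Icc.mpr (hx n)⟩, rfl⟩
  have hPmc : ∀ m, Pm m (inputSet d k)ᶜ = 0 := by
    intro m
    haveI := hPm1 m
    rw [measure_compl (measurableSet_inputSet d k) (measure_ne_top _ _), hPm3 m, measure_univ,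
      tsub_self]
  -- ultrafilter limits of measures of images
  have hex : ∀ E : Set (ℤ → ↥(Finset.Icc d k)), ∃ x : ENNReal,
      Tendsto (fun m => Pm m (ι '' E)) (U : Filter ℕ) (𝓝 x) := by
    intro E
    obtain ⟨x, -, hx⟩ := isCompact_univ.ultrafilter_le_nhds
      (U.map (fun m => Pm m (ι '' E))) (by simp)
    exact ⟨x, hx⟩
  choose p hp using hex
  have hp1 : p Set.univ = 1 := by
    refine tendsto_nhds_unique (hp _) ?_
    have h1 : ∀ m, Pm m (ι '' Set.univ) = 1 := by
      intro m
      rw [Set.image_univ, hrange]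
      exact hPm3 m
    simpa only [h1] using (tendsto_const_nhds : Tendsto (fun _ : ℕ => (1 : ENNReal)) _ _)
  have hadd : ∀ E F : Set (ℤ → ↥(Finset.Icc d k)), IsClopen E → IsClopen F → Disjoint E F →
      p (E ∪ F) = p E + p F := by
    intro E F hE hF hEF
    refine tendsto_nhds_unique (hp _) ?_
    have h1 : ∀ m, Pm m (ι '' (E ∪ F)) = Pm m (ι '' E) + Pm m (ι '' F) := by
      intro m
      rw [Set.image_union]
      exact measure_union (Set.disjoint_image_of_injective hι_inj hEF)
        (hemb.measurableSet_image.mpr hF.2.measurableSet)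
    simpa only [h1] using ((hp E).add (hp F))
  -- the limit measure on the compact sequence space
  obtain ⟨ν, hν1, hν2⟩ := exists_measure_of_clopen p hadd hp1
  haveI := hν1
  set Pstar : Measure (ℤ → ℤ) := Measure.map ι ν with hPstardef
  haveI hPstar1 : IsProbabilityMeasure Pstar := Measure.isProbabilityMeasure_map hι_meas.aemeasurable
  have hPstar3 : Pstar (inputSet d k) = 1 := by
    rw [hPstardef, Measure.map_apply hι_meas (measurableSet_inputSet d k)]
    have h1 : ι ⁻¹' inputSet d k = Set.univ := by
      rw [← hrange]
      exact Set.eq_univ_of_forall fun y => ⟨y, rfl⟩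
    rw [h1, measure_univ]
  -- shift invariance
  have hshift_cont : Continuous (shift : (ℤ → ↥(Finset.Icc d k)) → _) :=
    continuous_pi fun n => continuous_apply (n + 1)
  have hshiftν : Measure.map shift ν = ν := by
    haveI : IsProbabilityMeasure (Measure.map (shift (γ := ↥(Finset.Icc d k))) ν) :=
      Measure.isProbabilityMeasure_map measurable_shift.aemeasurable
    refine measure_ext_isClopen _ _ (fun E hE => ?_)
    rw [Measure.map_apply measurable_shift hE.2.measurableSet]
    have hpre : IsClopen (shift ⁻¹' E) := hE.preimage hshift_cont
    rw [hν2 _ hpre, hν2 _ hE]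
    refine tendsto_nhds_unique (hp _) ?_
    have h1 : ∀ m, Pm m (ι '' (shift ⁻¹' E)) = Pm m (ι '' E) := by
      intro m
      haveI := hPm1 m
      have hset : ι '' (shift ⁻¹' E) = shift ⁻¹' (ι '' E) ∩ inputSet d k := by
        ext x
        constructor
        · rintro ⟨y, hy, rfl⟩
          refine ⟨⟨shift y, hy, rfl⟩, ?_⟩
          rw [← hrange]
          exact ⟨y, rfl⟩
        · rintro ⟨hx1, hx2⟩
          rw [← hrange] at hx2
          obtain ⟨y, rfl⟩ := hx2
          refine ⟨y, ?_, rfl⟩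
          have h2 : ι (shift y) ∈ ι '' E := hx1
          exact (hι_inj.mem_set_image (a := shift y) (s := E)).mp h2
      rw [hset, measure_inter_conull (hPmc m),
        (hPm2 m).measure_preimage (hemb.measurableSet_image.mpr hE.2.measurableSet).nullMeasurableSet]
    exact Tendsto.congr (fun m => (h1 m).symm) (hp E)
  have hPstar2 : MeasurePreserving shift Pstar Pstar := by
    refine ⟨measurable_shift, ?_⟩
    rw [hPstardef, Measure.map_map measurable_shift hι_meas]
    have h1 : (shift : (ℤ → ℤ) → _) ∘ ι = ι ∘ (shift : (ℤ → ↥(Finset.Icc d k)) → _) := rfl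
    rw [h1, ← Measure.map_map hι_meas measurable_shift, hshiftν]
  -- cylinder limits
  have hcyl : ∀ (N : ℕ) (w : Fin N → ↥(Finset.Icc d k)),
      Tendsto (fun m => Pm m {x : ℤ → ℤ | ∀ i : Fin N, x ((i : ℕ) : ℤ) = (w i : ℤ)})
        (U : Filter ℕ)
        (𝓝 (Pstar {x : ℤ → ℤ | ∀ i : Fin N, x ((i : ℕ) : ℤ) = (w i : ℤ)})) := by
    intro N w
    set cyl : Set (ℤ → ℤ) := {x : ℤ → ℤ | ∀ i : Fin N, x ((i : ℕ) : ℤ) = (w i : ℤ)} with hcyldef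
    have hpreclopen : IsClopen (ι ⁻¹' cyl) := by
      have h1 : ι ⁻¹' cyl = ⋂ i : Fin N,
          (fun y : ℤ → ↥(Finset.Icc d k) => y ((i : ℕ) : ℤ)) ⁻¹' {w i} := by
        ext y
        simp only [Set.mem_preimage, Set.mem_iInter, Set.mem_setOf_eq, Set.mem_singleton_iff,
          hιdef]
        exact forall_congr' fun i => Subtype.coe_inj
      rw [h1]
      exact isClopen_iInter_of_finite fun i =>
        (isClopen_discrete {w i}).preimage (continuous_apply _)
    have h2 : Pstar cyl = p (ι ⁻¹' cyl) := by
      rw [hPstardef, Measure.map_apply hι_meas (measurableSet_cylinderZ N _), hν2 _ hpreclopen]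
    rw [h2]
    have h3 : ∀ m, Pm m (ι '' (ι ⁻¹' cyl)) = Pm m cyl := by
      intro m
      rw [Set.image_preimage_eq_inter_range, hrange, measure_inter_conull (hPmc m)]
    exact Tendsto.congr (fun m => h3 m) (hp _)
  -- block entropy limits
  have hblock : ∀ N : ℕ,
      Tendsto (fun m => blockEntropy (outAlphabet d k)
          (Measure.map bitShiftMap ((Pm m).prod J)) N) (U : Filter ℕ)
        (𝓝 (blockEntropy (outAlphabet d k) (Measure.map bitShiftMap (Pstar.prod J)) N)) := by
    intro N
    have hformula : ∀ m, blockEntropy (outAlphabet d k)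
        (Measure.map bitShiftMap ((Pm m).prod J)) N
        = ∑ u : Fin N → ↥(outAlphabet d k), Real.negMulLog
            (∑ w : Fin N → ↥(Finset.Icc d k),
              (Pm m {x : ℤ → ℤ | ∀ i : Fin N, x ((i : ℕ) : ℤ) = (w i : ℤ)}).toReal
                * (J {ω : ℤ → ℤ × ℤ |
                    ∀ i : Fin N, (w i : ℤ) + (ω ((i : ℕ) : ℤ)).1 - (ω ((i : ℕ) : ℤ)).2
                      = (u i : ℤ)}).toReal) := by
      intro m
      haveI := hPm1 m
      exact blockEntropy_out_formula d k J (Pm m) (hPm3 m) N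
    rw [blockEntropy_out_formula d k J Pstar hPstar3 N]
    refine Tendsto.congr (fun m => (hformula m).symm) ?_
    refine tendsto_finset_sum _ fun u _ => ?_
    refine (Real.continuous_negMulLog.tendsto _).comp ?_
    refine tendsto_finset_sum _ fun w _ => ?_
    exact Tendsto.mul_const _
      ((ENNReal.tendsto_toReal (measure_ne_top Pstar _)).comp (hcyl N w))
  -- the candidate achieves the supremum
  refine ⟨Pstar, hPstar1, hPstar2, hPstar3, ?_⟩
  rw [hcap]
  have hmem : entropyRateSeq (outAlphabet d k) (Measure.map bitShiftMap (Pstar.prod J))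
      - entropyRateSeq jitterAlphabet J ∈ S := ⟨Pstar, hPstar1, hPstar2, hPstar3, rfl⟩
  refine le_antisymm (le_csSup hSbdd hmem) ?_
  -- lower bound : sSup S ≤ value
  have hgoal : sSup S + hJ ≤ entropyRateSeq (outAlphabet d k)
      (Measure.map bitShiftMap (Pstar.prod J)) := by
    have hlb : ∀ N : ℕ, sSup S + hJ ≤ blockEntropy (outAlphabet d k)
        (Measure.map bitShiftMap (Pstar.prod J)) (N + 1) / (N + 1) := by
      intro N
      have h1 : Tendsto (fun m => c m + hJ) (U : Filter ℕ) (𝓝 (sSup S + hJ)) :=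
        ((hc_tendsto.mono_left hU).add tendsto_const_nhds)
      have h2 : Tendsto (fun m => blockEntropy (outAlphabet d k)
          (Measure.map bitShiftMap ((Pm m).prod J)) (N + 1) / (N + 1)) (U : Filter ℕ)
          (𝓝 (blockEntropy (outAlphabet d k)
            (Measure.map bitShiftMap (Pstar.prod J)) (N + 1) / (N + 1))) :=
        (hblock (N + 1)).div_const _
      refine le_of_tendsto_of_tendsto' h1 h2 fun m => ?_
      have h3 : c m + hJ = entropyRateSeq (outAlphabet d k)
          (Measure.map bitShiftMap ((Pm m).prod J)) := by
        rw [hPm4 m, hhJ]; ring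
      rw [h3]
      exact hrate_le (Pm m) (hPm1 m) N
    have h4 : entropyRateSeq (outAlphabet d k) (Measure.map bitShiftMap (Pstar.prod J))
        = ⨅ N : ℕ, blockEntropy (outAlphabet d k)
            (Measure.map bitShiftMap (Pstar.prod J)) (N + 1) / (N + 1) := rfl
    rw [h4]
    exact le_ciInf hlb
  linarith [hgoal]
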